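/- Let d ≥ 1, ε > 0, λ ∈ ℝ, and let the components of A : ℝ^d → ℝ^d be of class C^∞_pol. Then for every f ∈ S(ℝ^{2d}) and all φ, ψ ∈ S(ℝ^d): ∫_{ℝ^d} conj(φ(x)) (Op^A_{ε,λ}(f)ψ)(x) dx = (2πε)^{-d} ∫_{ℝ^{2d}} f(X) W^A_{ε,λ}(φ,ψ)(X) dX, all integrals being absolutely convergent. -/

import Mathlib

noncomputable section
open MeasureTheory Complex

/-- `ℝ^d` -/
abbrev Vd (d : ℕ) := Fin d → ℝ

/-- Euclidean dot product. -/
def dotR {d : ℕ} (x y : Vd d) : ℝ := ∑ l, x l * y l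

/-- Circulation `Γ^A([u,v]) = Σ_l (v_l - u_l) ∫_0^1 A_l(u + s(v-u)) ds`. -/
def circA {d : ℕ} (A : Vd d → Vd d) (u v : Vd d) : ℝ :=
  ∑ l, (v l - u l) * ∫ s in (0:ℝ)..1, A (u + s • (v - u)) l

/-- The `ε`-scaled circulation `Γ^A_ε([u,v]) := (1/ε) Γ^A([εu,εv])`. -/
def circAe {d : ℕ} (ε : ℝ) (A : Vd d → Vd d) (u v : Vd d) : ℝ :=
  ε⁻¹ * circA A (ε • u) (ε • v)

/-- A function is of class `C^∞_pol` if it is smooth and it together with all its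
derivatives is polynomially bounded. -/
def CPol {E F : Type*} [NormedAddCommGroup E] [NormedSpace ℝ E]
    [NormedAddCommGroup F] [NormedSpace ℝ F] (f : E → F) : Prop :=
  ContDiff ℝ (⊤ : ℕ∞) f ∧
    ∀ n : ℕ, ∃ (C : ℝ) (k : ℕ), ∀ x, ‖iteratedFDeriv ℝ n f x‖ ≤ C * (1 + ‖x‖) ^ k

/-- Magnetic Weyl quantization in the adiabatic scaling:
`(Op^A_{ε,λ}(f)φ)(x) = (2π)^{-d} ∫∫ e^{-i(y-x)·η} e^{-iλΓ^A_ε([x,y])} f((ε/2)(x+y),η) φ(y) dy dη`. -/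
def mOp {d : ℕ} (ε lam : ℝ) (A : Vd d → Vd d) (f : Vd d × Vd d → ℂ)
    (φ : Vd d → ℂ) (x : Vd d) : ℂ :=
  (((2 * Real.pi) ^ d)⁻¹ : ℝ) * ∫ y : Vd d, ∫ η : Vd d,
    Complex.exp (-Complex.I * dotR (y - x) η) *
      Complex.exp (-Complex.I * lam * circAe ε A x y) *
      f ((ε / 2) • (x + y), η) * φ y

/-- The magnetic Wigner transform `W^A_{ε,λ}(φ,ψ)`. -/
def mWig {d : ℕ} (ε lam : ℝ) (A : Vd d → Vd d) (φ ψ : Vd d → ℂ)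
    (X : Vd d × Vd d) : ℂ :=
  ∫ y : Vd d,
    Complex.exp (-Complex.I * dotR y X.2) *
      Complex.exp (-Complex.I * lam *
        circAe ε A (ε⁻¹ • X.1 - (2:ℝ)⁻¹ • y) (ε⁻¹ • X.1 + (2:ℝ)⁻¹ • y)) *
      (starRingEnd ℂ) (φ (ε⁻¹ • X.1 - (2:ℝ)⁻¹ • y)) * ψ (ε⁻¹ • X.1 + (2:ℝ)⁻¹ • y)

/-!
Both sides integrate the same kernel
`K(x, y, η) = e^{-i(y-x)·η} e^{-iλΓ^A_ε([x,y])} f(ε(x+y)/2, η) conj(φ(x)) ψ(y)` over `ℝ^{3d}`.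
It is absolutely integrable because the phases are unimodular, `f` decays in `η` uniformly in its
first argument, and `φ`, `ψ` are integrable. By Fubini the left side is `(2π)^{-d} ∫ K`, while
`f(X) W(X) = ∫ K(X₁/ε - y/2, X₁/ε + y/2, X₂) dy`. The substitution
`(X₁, X₂, y) ↦ (X₁/ε - y/2, X₁/ε + y/2, X₂)` is a dilation by `ε⁻¹` in `X₁` followed by
measure-preserving shears, so it multiplies Lebesgue measure by `ε^d`.
-/

theorem SchwartzMap.exists_integrable_bound_snd {E F V : Type*} [NormedAddCommGroup E]
    [NormedSpace ℝ E] [NormedAddCommGroup F] [NormedSpace ℝ F] [NormedAddCommGroup V]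
    [NormedSpace ℝ V] [MeasurableSpace F] (μ : Measure F) [μ.HasTemperateGrowth]
    (f : SchwartzMap (E × F) V) : ∃ g : F → ℝ, Integrable g μ ∧ ∀ a b, ‖f (a, b)‖ ≤ g b := by
  set l := μ.integrablePower
  refine ⟨fun b => 2 ^ l * (SchwartzMap.seminorm ℝ 0 0 f + SchwartzMap.seminorm ℝ l 0 f) *
    (1 + ‖b‖) ^ (-(l : ℝ)), (Measure.integrable_pow_neg_integrablePower μ).const_mul _,
    fun a b => ?_⟩
  have hdecay : ‖b‖ ^ (0 + l) * ‖f (a, b)‖ ≤ SchwartzMap.seminorm ℝ l 0 f :=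
    calc ‖b‖ ^ (0 + l) * ‖f (a, b)‖ ≤ ‖((a, b) : E × F)‖ ^ l * ‖f (a, b)‖ := by
          rw [zero_add]; gcongr; exact norm_snd_le (a, b)
      _ ≤ _ := SchwartzMap.norm_pow_mul_le_seminorm ℝ f l (a, b)
  simpa using pow_mul_le_of_le_of_pow_mul_le (norm_nonneg b) (norm_nonneg _)
    (SchwartzMap.norm_le_seminorm ℝ f (a, b)) hdecay

section ChangeOfVariables

variable {E : Type*} [NormedAddCommGroup E] [NormedSpace ℝ E] [MeasurableSpace E] [BorelSpace E]
  [FiniteDimensional ℝ E] (μ : Measure E) [μ.IsAddHaarMeasure]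

theorem map_smul_fst_prod_prod {α β : Type*} [MeasurableSpace α] [MeasurableSpace β]
    (ν : Measure α) (ρ : Measure β) [SFinite ν] [SFinite ρ] {r : ℝ} (hr : r ≠ 0) :
    ((μ.prod ν).prod ρ).map (fun w => ((r • w.1.1, w.1.2), w.2)) =
      ENNReal.ofReal |(r ^ Module.finrank ℝ E)⁻¹| • (μ.prod ν).prod ρ := by
  have hinner := (Measure.map_prod_map μ ν (measurable_const_smul r) measurable_id).symm
  rw [Measure.map_addHaar_smul μ hr, Measure.map_id, Measure.prod_smul_left] at hinner
  have houter := (Measure.map_prod_map (μ.prod ν) ρ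
    ((measurable_const_smul r).prodMap measurable_id) measurable_id).symm
  rw [hinner, Measure.map_id, Measure.prod_smul_left] at houter
  exact houter

theorem measurePreserving_sub_half_add_half :
    MeasurePreserving (fun z : E × E => (z.1 - (2 : ℝ)⁻¹ • z.2, z.1 + (2 : ℝ)⁻¹ • z.2))
      (μ.prod μ) (μ.prod μ) := by
  have hshift : MeasurePreserving (fun z : E × E => (z.2, z.1 - (2 : ℝ)⁻¹ • z.2))
      (μ.prod μ) (μ.prod μ) :=
    ((MeasurePreserving.id μ).skew_product (g := fun y x => x - (2 : ℝ)⁻¹ • y) (by fun_prop)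
      (ae_of_all _ fun y => (measurePreserving_sub_right μ _).map_eq)).comp
      Measure.measurePreserving_swap
  convert (measurePreserving_prod_add_swap μ μ).comp hshift using 2 with z
  simp only [Function.comp_apply]
  congr 1
  module

def wignerCoords (ε : ℝ) (w : (E × E) × E) : (E × E) × E :=
  ((ε⁻¹ • w.1.1 - (2 : ℝ)⁻¹ • w.2, ε⁻¹ • w.1.1 + (2 : ℝ)⁻¹ • w.2), w.1.2)

theorem measurable_wignerCoords (ε : ℝ) : Measurable (wignerCoords (E := E) ε) := by
  unfold wignerCoords
  fun_prop

theorem map_wignerCoords {ε : ℝ} (hε : ε ≠ 0) :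
    ((μ.prod μ).prod μ).map (wignerCoords ε) =
      ENNReal.ofReal (|ε| ^ Module.finrank ℝ E) • (μ.prod μ).prod μ := by
  have hpermute : MeasurePreserving (fun w : (E × E) × E => ((w.1.1, w.2), w.1.2))
      ((μ.prod μ).prod μ) ((μ.prod μ).prod μ) :=
    (measurePreserving_prodAssoc μ μ μ).symm.comp
      (((MeasurePreserving.id μ).prod Measure.measurePreserving_swap).comp
        (measurePreserving_prodAssoc μ μ μ))
  have hshear := ((measurePreserving_sub_half_add_half μ).prod (MeasurePreserving.id μ)).comp
    hpermute
  have hscale := map_smul_fst_prod_prod μ μ μ (inv_ne_zero hε)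
  rw [inv_pow, inv_inv, abs_pow] at hscale
  calc ((μ.prod μ).prod μ).map (wignerCoords ε)
      = (((μ.prod μ).prod μ).map fun w => ((ε⁻¹ • w.1.1, w.1.2), w.2)).map
          (Prod.map (fun z : E × E => (z.1 - (2 : ℝ)⁻¹ • z.2, z.1 + (2 : ℝ)⁻¹ • z.2)) id ∘
            fun w : (E × E) × E => ((w.1.1, w.2), w.1.2)) := by
        rw [Measure.map_map hshear.measurable (by fun_prop)]
        rfl
    _ = _ := by rw [hscale, Measure.map_smul, hshear.map_eq]

theorem MeasureTheory.Integrable.comp_wignerCoords {F : Type*} [NormedAddCommGroup F]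
    {g : (E × E) × E → F} (hg : Integrable g ((μ.prod μ).prod μ)) {ε : ℝ} (hε : ε ≠ 0) :
    Integrable (fun w => g (wignerCoords ε w)) ((μ.prod μ).prod μ) := by
  refine Integrable.comp_measurable (g := g) ?_ (measurable_wignerCoords ε)
  rw [map_wignerCoords μ hε]
  exact hg.smul_measure ENNReal.ofReal_ne_top

theorem integral_comp_wignerCoords {F : Type*} [NormedAddCommGroup F] [NormedSpace ℝ F]
    {g : (E × E) × E → F} (hg : AEStronglyMeasurable g ((μ.prod μ).prod μ)) {ε : ℝ}
    (hε : ε ≠ 0) :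
    ∫ w, g (wignerCoords ε w) ∂(μ.prod μ).prod μ =
      |ε| ^ Module.finrank ℝ E • ∫ w, g w ∂(μ.prod μ).prod μ := by
  have hg' : AEStronglyMeasurable g (((μ.prod μ).prod μ).map (wignerCoords ε)) := by
    rw [map_wignerCoords μ hε]
    exact hg.smul_measure _
  rw [← integral_map (measurable_wignerCoords ε).aemeasurable hg', map_wignerCoords μ hε,
    integral_smul_measure, ENNReal.toReal_ofReal (by positivity)]

end ChangeOfVariables

section WeylPairing

variable {d : ℕ}

@[fun_prop]
theorem Continuous.dotR {α : Type*} [TopologicalSpace α] {u v : α → Vd d} (hu : Continuous u)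
    (hv : Continuous v) : Continuous fun a => dotR (u a) (v a) := by
  unfold _root_.dotR
  fun_prop

@[fun_prop]
theorem Continuous.circAe {α : Type*} [TopologicalSpace α] {ε : ℝ} {A : Vd d → Vd d}
    (hA : Continuous A) {u v : α → Vd d} (hu : Continuous u) (hv : Continuous v) :
    Continuous fun a => circAe ε A (u a) (v a) := by
  unfold _root_.circAe circA
  fun_prop

def weylPairingIntegrand (ε lam : ℝ) (A : Vd d → Vd d) (f : Vd d × Vd d → ℂ) (φ ψ : Vd d → ℂ)
    (w : (Vd d × Vd d) × Vd d) : ℂ :=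
  Complex.exp (-Complex.I * dotR (w.1.2 - w.1.1) w.2) *
    Complex.exp (-Complex.I * lam * circAe ε A w.1.1 w.1.2) *
    f ((ε / 2) • (w.1.1 + w.1.2), w.2) * (starRingEnd ℂ) (φ w.1.1) * ψ w.1.2

theorem continuous_weylPairingIntegrand {ε lam : ℝ} {A : Vd d → Vd d} {f : Vd d × Vd d → ℂ}
    {φ ψ : Vd d → ℂ} (hA : Continuous A) (hf : Continuous f) (hφ : Continuous φ)
    (hψ : Continuous ψ) : Continuous (weylPairingIntegrand ε lam A f φ ψ) := by
  unfold weylPairingIntegrand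
  fun_prop

theorem norm_weylPairingIntegrand (ε lam : ℝ) (A : Vd d → Vd d) (f : Vd d × Vd d → ℂ)
    (φ ψ : Vd d → ℂ) (w : (Vd d × Vd d) × Vd d) :
    ‖weylPairingIntegrand ε lam A f φ ψ w‖ =
      ‖f ((ε / 2) • (w.1.1 + w.1.2), w.2)‖ * ‖φ w.1.1‖ * ‖ψ w.1.2‖ := by
  simp [weylPairingIntegrand, Complex.norm_exp]

theorem integrable_weylPairingIntegrand {ε lam : ℝ} {A : Vd d → Vd d} (hA : Continuous A)
    (f : SchwartzMap (Vd d × Vd d) ℂ) (φ ψ : SchwartzMap (Vd d) ℂ) :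
    Integrable (weylPairingIntegrand ε lam A f φ ψ) := by
  obtain ⟨g, hg, hfg⟩ := f.exists_integrable_bound_snd volume
  refine ((φ.integrable.norm.mul_prod ψ.integrable.norm).mul_prod hg).mono'
    (continuous_weylPairingIntegrand hA f.continuous φ.continuous ψ.continuous).aestronglyMeasurable
    (ae_of_all _ fun w => ?_)
  rw [norm_weylPairingIntegrand]
  calc ‖f ((ε / 2) • (w.1.1 + w.1.2), w.2)‖ * ‖φ w.1.1‖ * ‖ψ w.1.2‖
      ≤ g w.2 * ‖φ w.1.1‖ * ‖ψ w.1.2‖ := by gcongr; exact hfg _ _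
    _ = ‖φ w.1.1‖ * ‖ψ w.1.2‖ * g w.2 := by ring

theorem conj_mul_mOp_eq_integral (ε lam : ℝ) (A : Vd d → Vd d) (f : Vd d × Vd d → ℂ)
    (φ ψ : Vd d → ℂ) (x : Vd d) :
    (starRingEnd ℂ) (φ x) * mOp ε lam A f ψ x =
      (((2 * Real.pi) ^ d)⁻¹ : ℝ) * ∫ y, ∫ η, weylPairingIntegrand ε lam A f φ ψ ((x, y), η) := by
  rw [mOp, mul_left_comm, ← integral_const_mul]
  congr 1
  refine integral_congr_ae (ae_of_all _ fun y => ?_)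
  dsimp only
  rw [← integral_const_mul]
  refine integral_congr_ae (ae_of_all _ fun η => ?_)
  simp only [weylPairingIntegrand]
  ring

theorem mul_mWig_eq_integral {ε : ℝ} (hε : ε ≠ 0) (lam : ℝ) (A : Vd d → Vd d)
    (f : Vd d × Vd d → ℂ) (φ ψ : Vd d → ℂ) (X : Vd d × Vd d) :
    f X * mWig ε lam A φ ψ X =
      ∫ y, weylPairingIntegrand ε lam A f φ ψ (wignerCoords ε (X, y)) := by
  rw [mWig, ← integral_const_mul]
  refine integral_congr_ae (ae_of_all _ fun y => ?_)
  have hdiff : (ε⁻¹ • X.1 + (2 : ℝ)⁻¹ • y) - (ε⁻¹ • X.1 - (2 : ℝ)⁻¹ • y) = y := by module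
  have hmid : (ε / 2) • ((ε⁻¹ • X.1 - (2 : ℝ)⁻¹ • y) + (ε⁻¹ • X.1 + (2 : ℝ)⁻¹ • y)) = X.1 := by
    rw [sub_add_add_cancel, ← two_smul ℝ, smul_smul, smul_smul,
      show ε / 2 * 2 * ε⁻¹ = 1 by field_simp, one_smul]
  simp only [weylPairingIntegrand, wignerCoords, hdiff, hmid]
  ring

end WeylPairing

theorem statement5_general (d : ℕ) (ε : ℝ) (hε : 0 < ε) (lam : ℝ)
    (A : Vd d → Vd d) (hA : ∀ l, CPol fun x : Vd d => A x l)
    (f : SchwartzMap (Vd d × Vd d) ℂ) (φ ψ : SchwartzMap (Vd d) ℂ) :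
    Integrable (fun x : Vd d => (starRingEnd ℂ) (φ x) * mOp ε lam A (⇑f) (⇑ψ) x) ∧
    Integrable (fun X : Vd d × Vd d => f X * mWig ε lam A (⇑φ) (⇑ψ) X) ∧
    (∫ x : Vd d, (starRingEnd ℂ) (φ x) * mOp ε lam A (⇑f) (⇑ψ) x)
      = (((2 * Real.pi * ε) ^ d)⁻¹ : ℝ) *
          ∫ X : Vd d × Vd d, f X * mWig ε lam A (⇑φ) (⇑ψ) X := by
  have hkernel :
      Integrable (weylPairingIntegrand ε lam A f φ ψ) ((volume.prod volume).prod volume) :=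
    integrable_weylPairingIntegrand (continuous_pi fun l => (hA l).1.continuous) f φ ψ
  have hkernel_wigner := hkernel.comp_wignerCoords volume hε.ne'
  have hscale :
      ∫ w, weylPairingIntegrand ε lam A f φ ψ (wignerCoords ε w) ∂(volume.prod volume).prod volume =
        ε ^ d • ∫ w, weylPairingIntegrand ε lam A f φ ψ w ∂(volume.prod volume).prod volume := by
    have h := integral_comp_wignerCoords volume hkernel.aestronglyMeasurable hε.ne'
    rwa [Module.finrank_fin_fun, abs_of_pos hε] at h
  simp_rw [conj_mul_mOp_eq_integral, mul_mWig_eq_integral hε.ne', Measure.volume_eq_prod]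
  refine ⟨hkernel.integral_prod_left.integral_prod_left.const_mul _,
    hkernel_wigner.integral_prod_left, ?_⟩
  rw [integral_const_mul, ← integral_prod _ hkernel.integral_prod_left, ← integral_prod _ hkernel,
    ← integral_prod _ hkernel_wigner, hscale, Complex.real_smul, ← mul_assoc, ← Complex.ofReal_mul]
  congr 2
  field_simp
  ring

/-- Expectation values of magnetic pseudodifferential operators are given by pairing the
symbol with the magnetic Wigner transform:
`⟨φ, Op^A_{ε,λ}(f)ψ⟩ = (2πε)^{-d} ∫ f(X) W^A_{ε,λ}(φ,ψ)(X) dX`. -/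
theorem statement5 (d : ℕ) (hd : 1 ≤ d) (ε : ℝ) (hε : 0 < ε) (lam : ℝ)
    (A : Vd d → Vd d) (hA : ∀ l, CPol fun x : Vd d => A x l)
    (f : SchwartzMap (Vd d × Vd d) ℂ) (φ ψ : SchwartzMap (Vd d) ℂ) :
    Integrable (fun x : Vd d => (starRingEnd ℂ) (φ x) * mOp ε lam A (⇑f) (⇑ψ) x) ∧
    Integrable (fun X : Vd d × Vd d => f X * mWig ε lam A (⇑φ) (⇑ψ) X) ∧
    (∫ x : Vd d, (starRingEnd ℂ) (φ x) * mOp ε lam A (⇑f) (⇑ψ) x)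
      = (((2 * Real.pi * ε) ^ d)⁻¹ : ℝ) *
          ∫ X : Vd d × Vd d, f X * mWig ε lam A (⇑φ) (⇑ψ) X :=
  statement5_general d ε hε lam A hA f φ ψ
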